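/- arXiv:1312.5518 — 2 statements merged into one kernel-verified Lean document; each statement's English description precedes it below -/
import Mathlib

section
/- Let S be a semigroup that is the disjoint union of free monogenic subsemigroups ⟨a⟩, ⟨b⟩, ⟨c⟩, with ab = ba = a^i and ac, ca ∈ ⟨a⟩. Then either both bc, cb ∈ ⟨a⟩, or both bc, cb ∈ ⟨b⟩∪⟨c⟩. -/
/-- `pw a n` is `a ^ n` for `n ≥ 1` (with junk value `a` at `n = 0`),
defined in any magma. -/
def pw {S : Type*} [Mul S] (a : S) : ℕ → S
  | 0 => a
  | 1 => a
  | n + 2 => pw a (n + 1) * a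

/-- The monogenic subsemigroup `⟨a⟩ = {a^n : n ≥ 1}`. -/
def genSet {S : Type*} [Mul S] (a : S) : Set S := {x | ∃ n, 1 ≤ n ∧ pw a n = x}

/-- `a` has infinite order: its positive powers are pairwise distinct,
i.e. `⟨a⟩` is free monogenic. -/
def InfOrder {S : Type*} [Mul S] (a : S) : Prop :=
  ∀ m n : ℕ, 1 ≤ m → 1 ≤ n → pw a m = pw a n → m = n

/-!
If `bc ∈ ⟨a⟩` then `(cb)(cb) = c(bc)b ∈ ⟨a⟩`, because `c⟨a⟩ ⊆ ⟨a⟩` and `⟨a⟩b ⊆ ⟨a⟩`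
follow from `ca, ab ∈ ⟨a⟩`. A square of an element of `⟨b⟩` or `⟨c⟩` stays in that
subsemigroup, hence outside `⟨a⟩`; so `cb ∈ ⟨a⟩` as well, and symmetrically.
-/

section Semigroup

variable {S : Type*} [Semigroup S] {a : S}

theorem pw_succ {n : ℕ} (hn : 1 ≤ n) : pw a (n + 1) = pw a n * a := by
  obtain ⟨k, rfl⟩ := Nat.exists_eq_add_of_le' hn
  rfl

theorem pw_mem_genSet (n : ℕ) : pw a n ∈ genSet a := by
  cases n with
  | zero => exact ⟨1, le_rfl, rfl⟩
  | succ k => exact ⟨k + 1, by omega, rfl⟩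

theorem mul_gen_mem_genSet {x : S} (hx : x ∈ genSet a) : x * a ∈ genSet a := by
  obtain ⟨n, hn, rfl⟩ := hx
  rw [← pw_succ hn]
  exact pw_mem_genSet _

@[elab_as_elim]
theorem genSet_induction {p : S → Prop} (base : p a)
    (step : ∀ x ∈ genSet a, p x → p (x * a)) {x : S} (hx : x ∈ genSet a) : p x := by
  obtain ⟨n, hn, rfl⟩ := hx
  induction n, hn using Nat.le_induction with
  | base => exact base
  | succ n hn ih => rw [pw_succ hn]; exact step _ (pw_mem_genSet n) ih

theorem mul_mem_genSet {x y : S} (hx : x ∈ genSet a) (hy : y ∈ genSet a) :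
    x * y ∈ genSet a := by
  refine genSet_induction (mul_gen_mem_genSet hx) (fun y _ ih => ?_) hy
  rw [← mul_assoc]
  exact mul_gen_mem_genSet ih

theorem mul_mem_genSet_of_mul_gen_mem {z x : S} (hz : z * a ∈ genSet a) (hx : x ∈ genSet a) :
    z * x ∈ genSet a := by
  refine genSet_induction hz (fun x _ ih => ?_) hx
  rw [← mul_assoc]
  exact mul_gen_mem_genSet ih

theorem mul_mem_genSet_of_gen_mul_mem {z x : S} (hz : a * z ∈ genSet a) (hx : x ∈ genSet a) :
    x * z ∈ genSet a := by
  refine genSet_induction hz (fun x hx _ => ?_) hx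
  rw [mul_assoc]
  exact mul_mem_genSet hx hz

theorem mul_mul_self_mem_genSet {z w : S} (hz : z * a ∈ genSet a) (hw : a * w ∈ genSet a)
    (hwz : w * z ∈ genSet a) : z * w * (z * w) ∈ genSet a := by
  have hassoc : z * w * (z * w) = z * (w * z) * w := by simp only [mul_assoc]
  rw [hassoc]
  exact mul_mem_genSet_of_gen_mul_mem hw (mul_mem_genSet_of_mul_gen_mem hz hwz)

end Semigroup

theorem stmt_10_general {S : Type*} [Semigroup S] (a b c : S)
    (hab : genSet a ∩ genSet b = ∅) (hac : genSet a ∩ genSet c = ∅)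
    (hcover : genSet a ∪ genSet b ∪ genSet c = Set.univ)
    (i : ℕ) (h1 : a * b = pw a i) (h2 : b * a = pw a i)
    (h3 : a * c ∈ genSet a) (h4 : c * a ∈ genSet a) :
    (b * c ∈ genSet a ∧ c * b ∈ genSet a) ∨
      (b * c ∈ genSet b ∪ genSet c ∧ c * b ∈ genSet b ∪ genSet c) := by
  have hab' : a * b ∈ genSet a := h1 ▸ pw_mem_genSet i
  have hba' : b * a ∈ genSet a := h2 ▸ pw_mem_genSet i
  have hmem (x : S) : x ∈ genSet a ∨ x ∈ genSet b ∪ genSet c := by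
    rw [← Set.mem_union, ← Set.union_assoc, hcover]
    trivial
  have hsquare {y : S} (hy : y ∈ genSet b ∪ genSet c) : y * y ∉ genSet a := by
    intro hyy
    rcases hy with hy | hy
    · exact (Set.eq_empty_iff_forall_notMem.mp hab) _ ⟨hyy, mul_mem_genSet hy hy⟩
    · exact (Set.eq_empty_iff_forall_notMem.mp hac) _ ⟨hyy, mul_mem_genSet hy hy⟩
  have hcb_of_bc (hbc : b * c ∈ genSet a) : c * b ∈ genSet a :=
    (hmem _).resolve_right fun h => hsquare h (mul_mul_self_mem_genSet h4 hab' hbc)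
  have hbc_of_cb (hcb : c * b ∈ genSet a) : b * c ∈ genSet a :=
    (hmem _).resolve_right fun h => hsquare h (mul_mul_self_mem_genSet hba' h3 hcb)
  by_cases hbc : b * c ∈ genSet a
  · exact Or.inl ⟨hbc, hcb_of_bc hbc⟩
  · exact Or.inr ⟨(hmem _).resolve_left hbc, (hmem _).resolve_left (mt hbc_of_cb hbc)⟩

theorem stmt_10 {S : Type*} [Semigroup S] (a b c : S)
    (ha : InfOrder a) (hb : InfOrder b) (hc : InfOrder c)
    (hab : genSet a ∩ genSet b = ∅) (hac : genSet a ∩ genSet c = ∅)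
    (hbc : genSet b ∩ genSet c = ∅)
    (hcover : genSet a ∪ genSet b ∪ genSet c = Set.univ)
    (i : ℕ) (hi : 1 ≤ i) (h1 : a * b = pw a i) (h2 : b * a = pw a i)
    (h3 : a * c ∈ genSet a) (h4 : c * a ∈ genSet a) :
    (b * c ∈ genSet a ∧ c * b ∈ genSet a) ∨
      (b * c ∈ genSet b ∪ genSet c ∧ c * b ∈ genSet b ∪ genSet c) :=
  stmt_10_general a b c hab hac hcover i h1 h2 h3 h4
end

section
/- Let S be a semigroup that is the disjoint union of free monogenic subsemigroups ⟨a⟩, ⟨b⟩, ⟨c⟩, and suppose ab = b², ba = a², ac = b^i, ca = a^j, bc = a^k, cb = b^l for positive integers i, j, k, l. Then i = j = k = l. -/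
/-!
If `x * a = a²` then `x` acts on the powers of `a` like `a` itself: `xᵐ aⁿ = aᵐ⁺ⁿ`.
Evaluating the products `(ba)(ca)`, `(ab)(cb)` and `(bc)(ab)` with two different
bracketings then gives `aʲ⁺² = aⁱ⁺²`, `bˡ⁺² = bᵏ⁺²` and `bᵏ⁺² = bʲ⁺²`, and freeness of
`⟨a⟩` and `⟨b⟩` turns these into `i = j`, `k = l` and `j = k`.
-/

section Semigroup

variable {S : Type*} [Semigroup S] {a b c x : S} {i j k m n : ℕ}

theorem mul_pw_of_mul_eq_pw_two (h : x * a = pw a 2) (hn : 1 ≤ n) :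
    x * pw a n = pw a (n + 1) := by
  induction n, hn using Nat.le_induction with
  | base => exact h
  | succ n hn ih =>
    obtain ⟨n, rfl⟩ := Nat.exists_eq_add_of_le' hn
    change x * (pw a (n + 1) * a) = pw a (n + 2) * a
    rw [← mul_assoc, ih]

theorem pw_mul_pw_of_mul_eq_pw_two (h : x * a = pw a 2) (hm : 1 ≤ m) (hn : 1 ≤ n) :
    pw x m * pw a n = pw a (m + n) := by
  induction m, hm using Nat.le_induction generalizing n with
  | base => rw [Nat.add_comm]; exact mul_pw_of_mul_eq_pw_two h hn
  | succ m hm ih =>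
    obtain ⟨m, rfl⟩ := Nat.exists_eq_add_of_le' hm
    change pw x (m + 1) * x * pw a n = _
    rw [mul_assoc, mul_pw_of_mul_eq_pw_two h hn, ih (by omega)]
    congr 1; omega

theorem mul_pw_self (a : S) (hn : 1 ≤ n) : a * pw a n = pw a (n + 1) :=
  mul_pw_of_mul_eq_pw_two (x := a) rfl hn

theorem pw_add (a : S) (hm : 1 ≤ m) (hn : 1 ≤ n) : pw a (m + n) = pw a m * pw a n :=
  (pw_mul_pw_of_mul_eq_pw_two rfl hm hn).symm

theorem InfOrder.eq_of_assoc_ba_ca (ha : InfOrder a) (hba : b * a = pw a 2) (hac : a * c = pw b i)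
    (hca : c * a = pw a j) (hi : 1 ≤ i) (hj : 1 ≤ j) : i = j := by
  have key : pw a (2 + j) = pw a (i + 1 + 1) :=
    calc pw a (2 + j) = (b * a) * (c * a) := by rw [pw_add a one_le_two hj, hba, hca]
    _ = (b * (a * c)) * pw a 1 := by simp only [mul_assoc]; rfl
    _ = pw b (i + 1) * pw a 1 := by rw [hac, mul_pw_self b hi]
    _ = pw a (i + 1 + 1) := pw_mul_pw_of_mul_eq_pw_two hba (by omega) le_rfl
  have := ha _ _ (by omega) (by omega) key
  omega

theorem InfOrder.eq_of_assoc_bc_ab (hb : InfOrder b) (hab : a * b = pw b 2) (hbc : b * c = pw a k)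
    (hca : c * a = pw a j) (hj : 1 ≤ j) (hk : 1 ≤ k) : j = k := by
  have key : pw b (k + 2) = pw b (j + 1 + 1) :=
    calc pw b (k + 2) = (b * c) * (a * b) := by
          rw [hbc, hab, pw_mul_pw_of_mul_eq_pw_two hab hk (by omega)]
    _ = b * (pw a j * pw b 1) := by rw [← hca]; simp only [mul_assoc]; rfl
    _ = pw b (j + 1 + 1) := by
          rw [pw_mul_pw_of_mul_eq_pw_two hab hj le_rfl, mul_pw_self b (by omega)]
  have := hb _ _ (by omega) (by omega) key
  omega

end Semigroup

theorem stmt_18_general {S : Type*} [Semigroup S] (a b c : S)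
    (ha : InfOrder a) (hb : InfOrder b)
    (i j k l : ℕ) (hi : 1 ≤ i) (hj : 1 ≤ j) (hk : 1 ≤ k) (hl : 1 ≤ l)
    (h1 : a * b = pw b 2) (h2 : b * a = pw a 2)
    (h3 : a * c = pw b i) (h4 : c * a = pw a j)
    (h5 : b * c = pw a k) (h6 : c * b = pw b l) :
    i = j ∧ j = k ∧ k = l :=
  ⟨ha.eq_of_assoc_ba_ca h2 h3 h4 hi hj, hb.eq_of_assoc_bc_ab h1 h5 h4 hj hk,
    hb.eq_of_assoc_ba_ca h1 h5 h6 hk hl⟩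

theorem stmt_18 {S : Type*} [Semigroup S] (a b c : S)
    (ha : InfOrder a) (hb : InfOrder b) (hc : InfOrder c)
    (hab : genSet a ∩ genSet b = ∅) (hac : genSet a ∩ genSet c = ∅)
    (hbc : genSet b ∩ genSet c = ∅)
    (hcover : genSet a ∪ genSet b ∪ genSet c = Set.univ)
    (i j k l : ℕ) (hi : 1 ≤ i) (hj : 1 ≤ j) (hk : 1 ≤ k) (hl : 1 ≤ l)
    (h1 : a * b = pw b 2) (h2 : b * a = pw a 2)
    (h3 : a * c = pw b i) (h4 : c * a = pw a j)
    (h5 : b * c = pw a k) (h6 : c * b = pw b l) :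
    i = j ∧ j = k ∧ k = l :=
  stmt_18_general a b c ha hb i j k l hi hj hk hl h1 h2 h3 h4 h5 h6
end
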